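/- For all positive integers k and n with 1 <= k <= n-1, M(k,n) <= H(k)·n, where H(k) is the sum of the k largest terms of the multiset {1, 1/2, 1/2, 1/3, 1/3, 1/3, 1/4, 1/4, 1/4, 1/4, ...} (i.e., 1/t repeated t times for each t >= 1), taken in order. -/

import Mathlib

/-- The simple transposition `s_i = (i, i+1)` (1-indexed values) in `S_n`,
realized on `Fin n` (0-indexed positions `i-1` and `i`); junk value `1` otherwise. -/
def sgen (n i : ℕ) : Equiv.Perm (Fin n) :=
  if h : 0 < i ∧ i < n then Equiv.swap ⟨i - 1, by omega⟩ ⟨i, h.2⟩ else 1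

/-- `l` is a reduced word for `w ∈ S_n`: its product is `w` and it has minimal length. -/
def IsReducedWordFor (n : ℕ) (l : List ℕ) (w : Equiv.Perm (Fin n)) : Prop :=
  (l.map (sgen n)).prod = w ∧
    ∀ l' : List ℕ, (l'.map (sgen n)).prod = w → l.length ≤ l'.length

/-- The longest permutation `w_0 = n (n-1) ⋯ 2 1` of `S_n`. -/
def longestPerm (n : ℕ) : Equiv.Perm (Fin n) := Fin.revPerm

/-- `M(k,n)`: the maximum multiplicity of `s_k` among reduced words of `w_0 ∈ S_n`. -/
noncomputable def Mmax (k n : ℕ) : ℕ :=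
  sSup {N | ∃ l : List ℕ, IsReducedWordFor n l (longestPerm n) ∧ l.count k = N}

/-- Two finite sets are weakly separated. -/
def WeaklySeparated (I J : Finset ℕ) : Prop :=
  (∀ a ∈ I \ J, ∀ b ∈ J \ I, a < b) ∨ (∀ b ∈ J \ I, ∀ a ∈ I \ J, b < a)

/-- A monotone weakly separated path: pairwise weakly separated, and each step removes
one element `y` and adds one element `x > y`. -/
def IsMWSPath (P : List (Finset ℕ)) : Prop :=
  (∀ A ∈ P, ∀ B ∈ P, WeaklySeparated A B) ∧
    List.Chain' (fun A B => ∃ x y, y ∈ A ∧ x ∉ A ∧ y < x ∧ B = insert x (A.erase y)) P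

/-- The `i`-th term (0-indexed) of the sequence `1, 1/2, 1/2, 1/3, 1/3, 1/3, 1/4, ...`,
i.e. `1/t` where `t` is least with `i < t(t+1)/2`. -/
noncomputable def arcTerm (i : ℕ) : ℝ :=
  1 / (Nat.find (⟨i + 1, by
    have h2 : (i + 1) * 2 ≤ (i + 1) * (i + 1 + 1) := by nlinarith
    calc i < i + 1 := Nat.lt_succ_self i
      _ = (i + 1) * 2 / 2 := by omega
      _ ≤ (i + 1) * (i + 1 + 1) / 2 := Nat.div_le_div_right h2⟩ :
      ∃ t : ℕ, i < t * (t + 1) / 2) : ℕ)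


/-!
Follow the prefix products of a reduced word. Each letter of a reduced word creates a new
inversion, so the inversion set only grows, and an occurrence of `s_k` exchanges the values
`y < x` standing in positions `k - 1, k`; record it as the arc `(y, x]`. Two occurrences never
give the same arc, because the inversion `(y, x)` created by the first one is never undone.
A point `v` lies on at most `k` arcs, since each such occurrence raises the number of values
`≥ v` among the first `k` positions. Spreading weight `1 / (x - y)` over the points of each arc,
a point receives at most `H(k)`: among the arcs through it at most `D (D + 1) / 2` have length
`≤ D`. Summing over the `n - 1` points gives `M(k, n) ≤ H(k) (n - 1)`.
-/

open Finset

lemma one_div_le_arcTerm {i D : ℕ} (h : i < D * (D + 1) / 2) : (1 : ℝ) / D ≤ arcTerm i := by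
  have hex : ∃ t, i < t * (t + 1) / 2 := ⟨D, h⟩
  have hpos : 0 < Nat.find hex := (Nat.find_pos _).mpr (by simp)
  exact one_div_le_one_div_of_le (by exact_mod_cast hpos) (by exact_mod_cast Nat.find_min' hex h)

lemma arcTerm_nonneg (i : ℕ) : 0 ≤ arcTerm i := by
  unfold arcTerm; positivity

lemma sum_one_div_le_sum_arcTerm {ι : Type*} [DecidableEq ι] (S : Finset ι) (d : ι → ℕ)
    (hcount : ∀ D, 2 * #{i ∈ S | d i ≤ D} ≤ D * (D + 1)) :
    ∑ i ∈ S, (1 : ℝ) / d i ≤ ∑ j ∈ range #S, arcTerm j := by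
  induction S using Finset.induction_on_max_value d with
  | empty => simp
  | insert a S ha hmax ih =>
    have hS : 2 * (#S + 1) ≤ d a * (d a + 1) := by
      simpa [filter_true_of_mem fun x hx => (mem_insert.mp hx).elim (fun h => h ▸ le_rfl) (hmax x),
        card_insert_of_notMem ha] using hcount (d a)
    rw [sum_insert ha, card_insert_of_notMem ha, sum_range_succ, add_comm]
    refine add_le_add (ih fun D => le_trans ?_ (hcount D)) (one_div_le_arcTerm (by omega))
    exact Nat.mul_le_mul_left 2 (card_le_card (filter_subset_filter _ (subset_insert a S)))

/-- An arc through `v` is determined by its length and by the distance from `v` to its right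
end. -/
lemma two_mul_card_arcs_through_le {S : Finset (ℕ × ℕ)} {v D : ℕ}
    (hS : ∀ p ∈ S, p.1 < v ∧ v ≤ p.2 ∧ p.2 - p.1 ≤ D) : 2 * #S ≤ D * (D + 1) := by
  have hcard : #S ≤ #((range (D + 1)).sigma fun d => range d) := by
    refine card_le_card_of_injOn (fun p => ⟨p.2 - p.1, p.2 - v⟩) (fun p hp => ?_) ?_
    · have := hS p hp
      simp only [coe_sigma, Set.mem_sigma_iff, coe_range, Set.mem_Iio]
      omega
    · intro p hp p' hp' h
      simp only [Sigma.mk.injEq, heq_eq_eq] at h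
      have := hS p hp
      have := hS p' hp'
      ext <;> omega
  have hgauss := sum_range_id_mul_two (D + 1)
  rw [card_sigma, sum_congr rfl fun d _ => card_range d] at hcard
  rw [Nat.add_sub_cancel] at hgauss
  nlinarith

theorem card_le_sum_arcTerm_mul {T : Finset (ℕ × ℕ)} {k m : ℕ}
    (hT : ∀ p ∈ T, p.1 < p.2 ∧ p.2 ≤ m) (hcover : ∀ v, #{p ∈ T | p.1 < v ∧ v ≤ p.2} ≤ k) :
    (#T : ℝ) ≤ (∑ i ∈ range k, arcTerm i) * m := by
  have hsplit : (#T : ℝ) = ∑ v ∈ Ioc 0 m, ∑ p ∈ T with p.1 < v ∧ v ≤ p.2,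
      (1 : ℝ) / (p.2 - p.1 : ℕ) := by
    rw [card_eq_sum_ones, Nat.cast_sum, sum_comm' (t' := T) (s' := fun p => Ioc p.1 p.2)]
    · refine sum_congr rfl fun p hp => ?_
      have := hT p hp
      rw [sum_const, Nat.card_Ioc, nsmul_eq_mul, mul_one_div, div_self (by norm_cast; omega)]
      simp
    · intro v p
      simp only [mem_Ioc, mem_filter]
      constructor
      · rintro ⟨-, hp, hv⟩
        exact ⟨hv, hp⟩
      · rintro ⟨hv, hp⟩
        have := hT p hp
        exact ⟨⟨by omega, by omega⟩, hp, hv⟩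
  calc (#T : ℝ) = _ := hsplit
    _ ≤ ∑ v ∈ Ioc 0 m, ∑ i ∈ range k, arcTerm i := sum_le_sum fun v _ => ?_
    _ = (∑ i ∈ range k, arcTerm i) * m := by simp [mul_comm]
  refine (sum_one_div_le_sum_arcTerm _ _ fun D => ?_).trans ?_
  · rw [filter_filter]
    refine two_mul_card_arcs_through_le (v := v) fun p hp => ?_
    simp only [mem_filter] at hp
    omega
  · exact sum_le_sum_of_subset_of_nonneg (range_subset_range.mpr (hcover v))
      fun i _ _ => arcTerm_nonneg i

lemma eq_add_one_of_forall_le_add_one {f : ℕ → ℕ} {N : ℕ}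
    (hstep : ∀ i < N, f (i + 1) ≤ f i + 1) (hN : f 0 + N ≤ f N) {i : ℕ} (hi : i < N) :
    f (i + 1) = f i + 1 := by
  by_contra hne
  have hlt : ∑ j ∈ range N, ((f (j + 1) : ℤ) - f j) < ∑ _j ∈ range N, 1 :=
    sum_lt_sum (fun j hj => by have := hstep j (mem_range.1 hj); omega)
      ⟨i, mem_range.2 hi, by have := hstep i hi; omega⟩
  rw [sum_range_sub (fun j => (f j : ℤ)), sum_const, card_range] at hlt
  simp only [nsmul_eq_mul, mul_one] at hlt
  omega

lemma List.count_eq_card_filter_range {α : Type*} [DecidableEq α] (l : List α) (a : α) :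
    l.count a = #{i ∈ Finset.range l.length | l[i]? = some a} := by
  induction l using List.reverseRecOn with
  | nil => simp
  | append_singleton l b ih =>
    have hprefix : ∀ i ∈ Finset.range l.length, (l ++ [b])[i]? = some a ↔ l[i]? = some a :=
      fun i hi => by rw [List.getElem?_append_left (mem_range.1 hi)]
    rw [List.count_append, ih, List.length_append, List.length_singleton, range_add_one,
      filter_insert, Finset.filter_congr hprefix]
    by_cases hb : b = a
    · subst hb
      rw [if_pos (by simp), card_insert_of_notMem (by simp)]
      simp
    · rw [if_neg (by simpa using hb)]
      simp [hb]

variable {n : ℕ}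

lemma sgen_eq_swap {q : ℕ} (hq : 0 < q) (hqn : q < n) :
    sgen n q = Equiv.swap ⟨q - 1, by omega⟩ ⟨q, hqn⟩ :=
  dif_pos ⟨hq, hqn⟩

lemma sgen_mul_self (q : ℕ) : sgen n q * sgen n q = 1 := by
  unfold sgen; split <;> simp

lemma apply_sub_one_ne_apply {q : ℕ} (hq : 0 < q) (hqn : q < n) (π : Equiv.Perm (Fin n)) :
    π ⟨q - 1, by omega⟩ ≠ π ⟨q, hqn⟩ :=
  π.injective.ne (Fin.ne_of_val_ne (Nat.sub_one_lt hq.ne').ne)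

lemma swap_lt_swap_iff_of_succ_eq {i j c d : Fin n} (hij : (j : ℕ) = i + 1)
    (h : ¬(c = i ∧ d = j)) (h' : ¬(c = j ∧ d = i)) :
    Equiv.swap i j c < Equiv.swap i j d ↔ c < d := by
  simp only [Equiv.swap_apply_def]
  split_ifs <;> simp_all [Fin.lt_def, Fin.ext_iff, -Fin.val_fin_lt] <;> omega

def inversions (π : Equiv.Perm (Fin n)) : Finset (Fin n × Fin n) :=
  univ.filter fun p => p.1 < p.2 ∧ π⁻¹ p.2 < π⁻¹ p.1

lemma mem_inversions {π : Equiv.Perm (Fin n)} {a b : Fin n} :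
    (a, b) ∈ inversions π ↔ a < b ∧ π⁻¹ b < π⁻¹ a := by
  simp [inversions]

lemma apply_mem_inversions_mul {π σ : Equiv.Perm (Fin n)} {c d : Fin n} :
    (π c, π d) ∈ inversions (π * σ) ↔ π c < π d ∧ σ⁻¹ d < σ⁻¹ c := by
  simp [mem_inversions, mul_inv_rev, Equiv.Perm.mul_apply]

lemma apply_mem_inversions {π : Equiv.Perm (Fin n)} {c d : Fin n} :
    (π c, π d) ∈ inversions π ↔ π c < π d ∧ d < c := by
  simpa using apply_mem_inversions_mul (σ := 1)

lemma inversions_one : inversions (1 : Equiv.Perm (Fin n)) = ∅ := by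
  ext ⟨a, b⟩
  simp only [mem_inversions, inv_one, Equiv.Perm.one_apply, notMem_empty, iff_false, not_and]
  exact fun h => h.asymm

lemma inversions_mul_sgen_of_lt {q : ℕ} (hq : 0 < q) (hqn : q < n) {π : Equiv.Perm (Fin n)}
    (h : π ⟨q - 1, by omega⟩ < π ⟨q, hqn⟩) :
    inversions (π * sgen n q) = insert (π ⟨q - 1, by omega⟩, π ⟨q, hqn⟩) (inversions π) := by
  ext ⟨a, b⟩
  obtain ⟨c, rfl⟩ := π.surjective a
  obtain ⟨d, rfl⟩ := π.surjective b
  rw [mem_insert, apply_mem_inversions_mul, apply_mem_inversions, sgen_eq_swap hq hqn,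
    Equiv.swap_inv, Prod.ext_iff, π.injective.eq_iff, π.injective.eq_iff]
  by_cases h1 : c = ⟨q - 1, by omega⟩ ∧ d = ⟨q, hqn⟩
  · obtain ⟨rfl, rfl⟩ := h1
    simpa [h]
  by_cases h2 : c = ⟨q, hqn⟩ ∧ d = ⟨q - 1, by omega⟩
  · obtain ⟨rfl, rfl⟩ := h2
    simpa [h.not_gt] using fun h _ => (Nat.sub_one_lt hq.ne').ne' h
  rw [swap_lt_swap_iff_of_succ_eq (Nat.sub_add_cancel hq).symm (by tauto) (by tauto)]
  tauto

lemma inversions_mul_sgen_of_gt {q : ℕ} (hq : 0 < q) (hqn : q < n) {π : Equiv.Perm (Fin n)}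
    (h : π ⟨q, hqn⟩ < π ⟨q - 1, by omega⟩) :
    inversions (π * sgen n q) = (inversions π).erase (π ⟨q, hqn⟩, π ⟨q - 1, by omega⟩) := by
  ext ⟨a, b⟩
  obtain ⟨c, rfl⟩ := π.surjective a
  obtain ⟨d, rfl⟩ := π.surjective b
  rw [mem_erase, apply_mem_inversions_mul, apply_mem_inversions, sgen_eq_swap hq hqn,
    Equiv.swap_inv, Ne, Prod.ext_iff, π.injective.eq_iff, π.injective.eq_iff]
  by_cases h1 : c = ⟨q, hqn⟩ ∧ d = ⟨q - 1, by omega⟩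
  · obtain ⟨rfl, rfl⟩ := h1
    simp
  by_cases h2 : c = ⟨q - 1, by omega⟩ ∧ d = ⟨q, hqn⟩
  · obtain ⟨rfl, rfl⟩ := h2
    simp [h.not_gt]
  rw [swap_lt_swap_iff_of_succ_eq (Nat.sub_add_cancel hq).symm (by tauto) (by tauto)]
  tauto

lemma card_inversions_mul_sgen_le (π : Equiv.Perm (Fin n)) (q : ℕ) :
    #(inversions (π * sgen n q)) ≤ #(inversions π) + 1 := by
  by_cases hq : 0 < q ∧ q < n
  · obtain ⟨hq, hqn⟩ := hq
    rcases lt_or_gt_of_ne (apply_sub_one_ne_apply hq hqn π) with h | h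
    · rw [inversions_mul_sgen_of_lt hq hqn h]
      exact card_insert_le _ _
    · rw [inversions_mul_sgen_of_gt hq hqn h]
      exact card_erase_le.trans (Nat.le_succ _)
  · rw [sgen, dif_neg hq, mul_one]
    exact Nat.le_succ _

lemma pos_and_lt_of_card_inversions_lt {π : Equiv.Perm (Fin n)} {q : ℕ}
    (h : #(inversions π) < #(inversions (π * sgen n q))) : 0 < q ∧ q < n := by
  by_contra hq
  rw [sgen, dif_neg hq, mul_one] at h
  exact lt_irrefl _ h

lemma apply_sub_one_lt_of_card_inversions_lt {q : ℕ} (hq : 0 < q) (hqn : q < n)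
    {π : Equiv.Perm (Fin n)} (h : #(inversions π) < #(inversions (π * sgen n q))) :
    π ⟨q - 1, by omega⟩ < π ⟨q, hqn⟩ := by
  refine (lt_or_gt_of_ne (apply_sub_one_ne_apply hq hqn π)).resolve_right fun hgt => ?_
  rw [inversions_mul_sgen_of_gt hq hqn hgt] at h
  exact card_erase_le.not_gt h

lemma inversions_subset_mul_sgen_of_card_lt {π : Equiv.Perm (Fin n)} {q : ℕ}
    (h : #(inversions π) < #(inversions (π * sgen n q))) :
    inversions π ⊆ inversions (π * sgen n q) := by
  obtain ⟨hq, hqn⟩ := pos_and_lt_of_card_inversions_lt h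
  rw [inversions_mul_sgen_of_lt hq hqn (apply_sub_one_lt_of_card_inversions_lt hq hqn h)]
  exact subset_insert _ _

lemma eq_one_of_strictMono {π : Equiv.Perm (Fin n)} (hπ : StrictMono π) : π = 1 :=
  Equiv.ext (congrFun ((hπ.range_inj strictMono_id).1 (by simp [π.surjective.range_eq])))

lemma exists_descent {π : Equiv.Perm (Fin n)} (hπ : π ≠ 1) :
    ∃ q, ∃ (hq : 0 < q) (hqn : q < n), π ⟨q, hqn⟩ < π ⟨q - 1, by omega⟩ := by
  contrapose! hπ
  obtain _ | m := n
  · exact Subsingleton.elim _ _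
  refine eq_one_of_strictMono (Fin.strictMono_iff_lt_succ.2 fun i => ?_)
  have hle := hπ (i + 1) i.succ_pos (by omega)
  have hcast : (⟨i + 1 - 1, by omega⟩ : Fin (m + 1)) = i.castSucc := Fin.ext (by simp)
  rw [hcast] at hle
  exact lt_of_le_of_ne hle (π.injective.ne Fin.castSucc_lt_succ.ne)

lemma mk_mem_inversions_of_descent {q : ℕ} (hq : 0 < q) (hqn : q < n)
    {π : Equiv.Perm (Fin n)} (h : π ⟨q, hqn⟩ < π ⟨q - 1, by omega⟩) :
    (π ⟨q, hqn⟩, π ⟨q - 1, by omega⟩) ∈ inversions π :=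
  apply_mem_inversions.2 ⟨h, Fin.mk_lt_mk.2 (Nat.sub_one_lt hq.ne')⟩

lemma eq_one_of_inversions_eq_empty {π : Equiv.Perm (Fin n)} (h : inversions π = ∅) :
    π = 1 := by
  by_contra hπ
  obtain ⟨q, hq, hqn, hlt⟩ := exists_descent hπ
  simpa [h] using mk_mem_inversions_of_descent hq hqn hlt

lemma exists_word_length_eq_card_inversions (π : Equiv.Perm (Fin n)) :
    ∃ l : List ℕ, (l.map (sgen n)).prod = π ∧ l.length = #(inversions π) := by
  induction h : #(inversions π) generalizing π with
  | zero => exact ⟨[], by simp [eq_one_of_inversions_eq_empty (card_eq_zero.mp h)], rfl⟩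
  | succ N ih =>
    have hπ : π ≠ 1 := by
      rintro rfl
      simp [inversions_one] at h
    obtain ⟨q, hq, hqn, hlt⟩ := exists_descent hπ
    obtain ⟨l, hl, hlen⟩ := ih (π * sgen n q) (by
      rw [inversions_mul_sgen_of_gt hq hqn hlt,
        card_erase_of_mem (mk_mem_inversions_of_descent hq hqn hlt), h, Nat.add_sub_cancel])
    exact ⟨l ++ [q], by simp [hl, mul_assoc, sgen_mul_self], by simp [hlen]⟩

def leftBlock (k : ℕ) (π : Equiv.Perm (Fin n)) : Finset (Fin n) :=
  univ.filter fun a => (π⁻¹ a : ℕ) < k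

lemma card_leftBlock_le (k : ℕ) (π : Equiv.Perm (Fin n)) : #(leftBlock k π) ≤ k := by
  simpa using card_le_card_of_injOn (fun a => (π⁻¹ a : ℕ)) (t := range k)
    (fun a ha => by simpa [leftBlock] using ha)
    (fun a _ b _ h => π⁻¹.injective (Fin.ext h))

lemma leftBlock_mul_sgen_of_ne {k q : ℕ} (hqk : q ≠ k) (π : Equiv.Perm (Fin n)) :
    leftBlock k (π * sgen n q) = leftBlock k π := by
  by_cases hq : 0 < q ∧ q < n
  · ext a
    simp only [leftBlock, mem_filter, mem_univ, true_and, mul_inv_rev, Equiv.Perm.mul_apply,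
      sgen_eq_swap hq.1 hq.2, Equiv.swap_inv, Equiv.swap_apply_def]
    split_ifs <;> simp_all [Fin.ext_iff] <;> omega
  · rw [sgen, dif_neg hq, mul_one]

lemma leftBlock_mul_sgen_self {k : ℕ} (hk : 0 < k) (hkn : k < n) (π : Equiv.Perm (Fin n)) :
    leftBlock k (π * sgen n k) =
      insert (π ⟨k, hkn⟩) ((leftBlock k π).erase (π ⟨k - 1, by omega⟩)) := by
  ext a
  obtain ⟨c, rfl⟩ := π.surjective a
  simp only [leftBlock, mem_insert, mem_erase, mem_filter, mem_univ, true_and, mul_inv_rev,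
    Equiv.Perm.mul_apply, sgen_eq_swap hk hkn, Equiv.swap_inv, Equiv.swap_apply_def,
    Equiv.Perm.coe_inv, Equiv.symm_apply_apply, π.injective.eq_iff, π.injective.ne_iff]
  split_ifs <;> simp_all [Fin.ext_iff]
  omega

lemma card_filter_leftBlock_mul_sgen_self {k : ℕ} (hk : 0 < k) (hkn : k < n)
    {π : Equiv.Perm (Fin n)} (h : π ⟨k - 1, by omega⟩ < π ⟨k, hkn⟩) (v : ℕ) :
    #((leftBlock k (π * sgen n k)).filter fun a : Fin n => v ≤ a) =
      #((leftBlock k π).filter fun a : Fin n => v ≤ a) +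
      if (π ⟨k - 1, by omega⟩ : ℕ) < v ∧ v ≤ π ⟨k, hkn⟩ then 1 else 0 := by
  have hy : π ⟨k - 1, by omega⟩ ∈ leftBlock k π := by
    simpa [leftBlock] using Nat.sub_one_lt hk.ne'
  have hx : π ⟨k, hkn⟩ ∉ (leftBlock k π).erase (π ⟨k - 1, by omega⟩) := by simp [leftBlock]
  have h' : (π ⟨k - 1, by omega⟩ : ℕ) < π ⟨k, hkn⟩ := h
  simp only [card_filter]
  rw [leftBlock_mul_sgen_self hk hkn, sum_insert hx, ← add_sum_erase _ _ hy]
  split_ifs <;> omega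

variable (n) in
def prefixProd (l : List ℕ) (i : ℕ) : Equiv.Perm (Fin n) := ((l.take i).map (sgen n)).prod

lemma prefixProd_zero (l : List ℕ) : prefixProd n l 0 = 1 := by
  simp [prefixProd]

lemma prefixProd_succ {l : List ℕ} {i : ℕ} (hi : i < l.length) :
    prefixProd n l (i + 1) = prefixProd n l i * sgen n l[i] := by
  rw [prefixProd, prefixProd, List.take_add_one, List.getElem?_eq_getElem hi, List.map_append,
    List.prod_append]
  simp

lemma prefixProd_of_length_le {l : List ℕ} {i : ℕ} (hi : l.length ≤ i) :
    prefixProd n l i = (l.map (sgen n)).prod := by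
  rw [prefixProd, List.take_of_length_le hi]

namespace IsReducedWordFor

variable {l : List ℕ} {w : Equiv.Perm (Fin n)} (hl : IsReducedWordFor n l w)
include hl

lemma card_inversions_prefixProd_succ {i : ℕ} (hi : i < l.length) :
    #(inversions (prefixProd n l (i + 1))) = #(inversions (prefixProd n l i)) + 1 := by
  refine eq_add_one_of_forall_le_add_one (f := fun i => #(inversions (prefixProd n l i)))
    (fun j hj => ?_) ?_ hi
  · rw [prefixProd_succ hj]
    exact card_inversions_mul_sgen_le _ _
  · obtain ⟨l', hl', hlen⟩ := exists_word_length_eq_card_inversions w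
    simpa [prefixProd_zero, inversions_one, prefixProd_of_length_le le_rfl, hl.1, ← hlen]
      using hl.2 l' hl'

lemma monotone_inversions_prefixProd : Monotone fun i => inversions (prefixProd n l i) := by
  refine monotone_nat_of_le_succ fun i => ?_
  by_cases hi : i < l.length
  · have hcard := hl.card_inversions_prefixProd_succ hi
    rw [prefixProd_succ hi] at hcard ⊢
    exact inversions_subset_mul_sgen_of_card_lt (by omega)
  · rw [prefixProd_of_length_le (by omega), prefixProd_of_length_le (by omega)]

section Occurrences

variable {k : ℕ} (hk : 0 < k) (hkn : k < n)
include hk hkn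

lemma prefixProd_apply_sub_one_lt {i : ℕ} (hi : i < l.length) (hik : l[i] = k) :
    prefixProd n l i ⟨k - 1, by omega⟩ < prefixProd n l i ⟨k, hkn⟩ := by
  have hcard := hl.card_inversions_prefixProd_succ hi
  rw [prefixProd_succ hi, hik] at hcard
  exact apply_sub_one_lt_of_card_inversions_lt hk hkn (by omega)

lemma card_filter_leftBlock_prefixProd_succ (v i : ℕ) :
    #((leftBlock k (prefixProd n l (i + 1))).filter fun a : Fin n => v ≤ a) =
      #((leftBlock k (prefixProd n l i)).filter fun a : Fin n => v ≤ a) +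
        if l[i]? = some k ∧ (prefixProd n l i ⟨k - 1, by omega⟩ : ℕ) < v ∧
          v ≤ prefixProd n l i ⟨k, hkn⟩ then 1 else 0 := by
  by_cases hi : i < l.length
  · rw [prefixProd_succ hi]
    by_cases hik : l[i] = k
    · rw [hik, card_filter_leftBlock_mul_sgen_self hk hkn
        (hl.prefixProd_apply_sub_one_lt hk hkn hi hik)]
      simp [List.getElem?_eq_getElem hi, hik]
    · rw [leftBlock_mul_sgen_of_ne hik]
      simp [List.getElem?_eq_getElem hi, hik]
  · rw [prefixProd_of_length_le (by omega), prefixProd_of_length_le (by omega)]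
    simp [List.getElem?_eq_none (by omega : l.length ≤ i)]

lemma card_occurrences_covering_le (v : ℕ) :
    #{i ∈ Finset.range l.length | l[i]? = some k ∧
      (prefixProd n l i ⟨k - 1, by omega⟩ : ℕ) < v ∧ v ≤ prefixProd n l i ⟨k, hkn⟩} ≤ k := by
  set g := fun i => #((leftBlock k (prefixProd n l i)).filter fun a : Fin n => v ≤ a)
  have htelescope : ∀ N, g 0 + ∑ i ∈ Finset.range N, (if l[i]? = some k ∧
      (prefixProd n l i ⟨k - 1, by omega⟩ : ℕ) < v ∧ v ≤ prefixProd n l i ⟨k, hkn⟩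
      then 1 else 0) = g N := by
    intro N
    induction N with
    | zero => simp
    | succ N ih =>
      rw [sum_range_succ, ← add_assoc, ih]
      exact (hl.card_filter_leftBlock_prefixProd_succ hk hkn v N).symm
  have hg : g l.length ≤ k := (card_filter_le _ _).trans (card_leftBlock_le k _)
  rw [card_filter]
  have := htelescope l.length
  omega

lemma injOn_arcs : Set.InjOn
    (fun i => ((prefixProd n l i ⟨k - 1, by omega⟩ : ℕ), (prefixProd n l i ⟨k, hkn⟩ : ℕ)))
    ({i ∈ Finset.range l.length | l[i]? = some k} : Finset ℕ) := by
  -- the inversion created at step `i` persists, while step `i'` swaps an ascent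
  have hstep : ∀ i i', i < i' → i < l.length → l[i]? = some k →
      prefixProd n l i ⟨k - 1, by omega⟩ = prefixProd n l i' ⟨k - 1, by omega⟩ →
      prefixProd n l i ⟨k, hkn⟩ ≠ prefixProd n l i' ⟨k, hkn⟩ := by
    intro i i' hii' hi hik hy hx
    rw [List.getElem?_eq_getElem hi, Option.some_inj] at hik
    have hnew : (prefixProd n l i ⟨k - 1, by omega⟩, prefixProd n l i ⟨k, hkn⟩) ∈
        inversions (prefixProd n l (i + 1)) := by
      rw [prefixProd_succ hi, hik,
        inversions_mul_sgen_of_lt hk hkn (hl.prefixProd_apply_sub_one_lt hk hkn hi hik)]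
      exact mem_insert_self _ _
    have hold := hl.monotone_inversions_prefixProd hii' hnew
    rw [hx, hy, apply_mem_inversions] at hold
    exact absurd (Fin.lt_def.1 hold.2) (by simp)
  intro i hi i' hi' h
  simp only [coe_filter, mem_range] at hi hi'
  simp only [Prod.mk.injEq, ← Fin.ext_iff] at h
  rcases lt_trichotomy i i' with hlt | rfl | hlt
  · exact absurd h.2 (hstep i i' hlt hi.1 hi.2 h.1)
  · rfl
  · exact absurd h.2.symm (hstep i' i hlt hi'.1 hi'.2 h.1.symm)

theorem count_le_sum_arcTerm_mul :
    (l.count k : ℝ) ≤ (∑ i ∈ range k, arcTerm i) * (n - 1 : ℕ) := by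
  rw [List.count_eq_card_filter_range, ← card_image_of_injOn (hl.injOn_arcs hk hkn)]
  refine card_le_sum_arcTerm_mul (fun p hp => ?_) (fun v => ?_)
  · obtain ⟨i, hi, rfl⟩ := mem_image.1 hp
    simp only [mem_filter, mem_range] at hi
    rw [List.getElem?_eq_getElem hi.1, Option.some_inj] at hi
    exact ⟨hl.prefixProd_apply_sub_one_lt hk hkn hi.1 hi.2, by omega⟩
  · rw [filter_image, filter_filter]
    exact card_image_le.trans (hl.card_occurrences_covering_le hk hkn v)

end Occurrences

end IsReducedWordFor

theorem stmt5 (k n : ℕ) (hk : 1 ≤ k) (hkn : k ≤ n - 1) :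
    (Mmax k n : ℝ) ≤ (∑ i ∈ Finset.range k, arcTerm i) * n := by
  have hH : 0 ≤ ∑ i ∈ Finset.range k, arcTerm i := sum_nonneg fun i _ => arcTerm_nonneg i
  refine (Nat.cast_le.2 (csSup_le' fun N hN => Nat.le_floor ?_)).trans
    (Nat.floor_le (mul_nonneg hH n.cast_nonneg))
  obtain ⟨l, hl, rfl⟩ := hN
  calc (l.count k : ℝ) ≤ (∑ i ∈ Finset.range k, arcTerm i) * (n - 1 : ℕ) :=
        hl.count_le_sum_arcTerm_mul (by omega) (by omega)
    _ ≤ (∑ i ∈ Finset.range k, arcTerm i) * n := by gcongr; exact_mod_cast n.sub_le 1
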